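/- arXiv:1911.09650 — 5 statements merged into one kernel-verified Lean document; each statement's English description precedes it below -/
import Mathlib

section
/- Let k ≥ 1. Any finite simple graph on n vertices with at least n·k edges contains a path on k+1 vertices (i.e., a path of length k). -/
/-!
Repeatedly deleting a vertex with fewer than `k` neighbours among the remaining ones destroys
at most `k - 1` edges per vertex, so with at least `n k` edges the process must stop at a nonempty
set `T` on which every vertex has at least `k` neighbours in `T` (the invariant is
`#S * k < e(S) + #S`, which fails for `S = ∅`). Inside `T` a path can be extended
greedily at its start until it has length `k`: a path of length `t < k` has only `t` vertices
other than its start, so the start still has a neighbour in `T` off the path.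
-/

open Finset

namespace SimpleGraph

variable {V : Type*} (G : SimpleGraph V) [DecidableRel G.Adj]

def inducedEdges (S : Finset V) : Finset (Sym2 V) :=
  {e ∈ S.sym2 | e ∈ G.edgeSet}

theorem inducedEdges_univ [Fintype V] : G.inducedEdges univ = G.edgeFinset := by
  ext e
  simp [inducedEdges]

variable [DecidableEq V]

theorem card_inducedEdges_le_erase (S : Finset V) (v : V) :
    #(G.inducedEdges S) ≤ #(G.inducedEdges (S.erase v)) + #{w ∈ S | G.Adj v w} := by
  have hcover : G.inducedEdges S ⊆
      {w ∈ S | G.Adj v w}.image (fun w => s(v, w)) ∪ G.inducedEdges (S.erase v) := by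
    intro e he
    simp only [inducedEdges, mem_filter, mem_sym2_iff] at he
    by_cases hv : v ∈ e
    · obtain ⟨w, rfl⟩ := Sym2.mem_iff_exists.1 hv
      exact mem_union_left _ <|
        mem_image_of_mem _ (mem_filter.2 ⟨he.1 w (Sym2.mem_mk_right v w), he.2⟩)
    · refine mem_union_right _ (mem_filter.2 ⟨mem_sym2_iff.2 fun x hx => ?_, he.2⟩)
      exact mem_erase.2 ⟨fun hxv => hv (hxv ▸ hx), he.1 x hx⟩
  calc #(G.inducedEdges S)
      ≤ #({w ∈ S | G.Adj v w}.image fun w => s(v, w)) + #(G.inducedEdges (S.erase v)) :=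
        (card_le_card hcover).trans (card_union_le _ _)
    _ ≤ _ := by rw [add_comm]; gcongr; exact card_image_le

theorem exists_subset_forall_le_card_adj (k : ℕ) (S : Finset V)
    (hS : #S * k < #(G.inducedEdges S) + #S) :
    ∃ T ⊆ S, T.Nonempty ∧ ∀ v ∈ T, k ≤ #{w ∈ T | G.Adj v w} := by
  induction S using strongInduction with
  | H S ih =>
    by_cases hdeg : ∀ v ∈ S, k ≤ #{w ∈ S | G.Adj v w}
    · refine ⟨S, Subset.rfl, nonempty_iff_ne_empty.2 ?_, hdeg⟩
      rintro rfl
      simp [inducedEdges] at hS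
    · push Not at hdeg
      obtain ⟨v, hv, hvk⟩ := hdeg
      have herase := G.card_inducedEdges_le_erase S v
      have hcard := card_erase_add_one hv
      have hS' : #(S.erase v) * k < #(G.inducedEdges (S.erase v)) + #(S.erase v) := by
        rw [← hcard, add_one_mul] at hS
        omega
      obtain ⟨T, hT, hTne, hTdeg⟩ := ih _ (erase_ssubset hv) hS'
      exact ⟨T, hT.trans (erase_subset v S), hTne, hTdeg⟩

theorem exists_adj_notMem_support {S : Finset V} {u w : V} (p : G.Walk u w)
    (hp : p.length < #{x ∈ S | G.Adj u x}) : ∃ x ∈ S, G.Adj u x ∧ x ∉ p.support := by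
  by_contra! h
  have hsub : {x ∈ S | G.Adj u x} ⊆ p.support.toFinset.erase u := fun x hx => by
    rw [mem_filter] at hx
    exact mem_erase.2 ⟨hx.2.ne', List.mem_toFinset.2 (h x hx.1 hx.2)⟩
  have hsupport : #p.support.toFinset ≤ p.length + 1 :=
    p.length_support ▸ List.toFinset_card_le _
  have := card_le_card hsub
  rw [card_erase_of_mem (List.mem_toFinset.2 p.start_mem_support)] at this
  omega

theorem exists_isPath_length_of_le_card_adj {S : Finset V} (hS : S.Nonempty) {k : ℕ}
    (hdeg : ∀ v ∈ S, k ≤ #{w ∈ S | G.Adj v w}) {t : ℕ} (ht : t ≤ k) :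
    ∃ (u w : V) (p : G.Walk u w), p.IsPath ∧ p.length = t ∧ ∀ x ∈ p.support, x ∈ S := by
  induction t with
  | zero =>
    obtain ⟨u, hu⟩ := hS
    exact ⟨u, u, .nil, .nil, rfl, by simpa using hu⟩
  | succ t ih =>
    obtain ⟨u, w, p, hp, rfl, hpS⟩ := ih (by omega)
    have hlen : p.length < #{x ∈ S | G.Adj u x} :=
      (hdeg u (hpS u p.start_mem_support)).trans_lt' ht
    obtain ⟨x, hxS, hux, hxp⟩ := G.exists_adj_notMem_support p hlen
    refine ⟨x, w, .cons hux.symm p, hp.cons hxp, rfl, ?_⟩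
    simp only [Walk.support_cons, List.mem_cons, forall_eq_or_imp]
    exact ⟨hxS, hpS⟩

end SimpleGraph

theorem exists_path_of_many_edges_general {V : Type} [Fintype V] [Nonempty V] [DecidableEq V]
    (G : SimpleGraph V) [DecidableRel G.Adj] (k : ℕ)
    (h : Fintype.card V * k ≤ G.edgeFinset.card) :
    ∃ (u w : V) (p : G.Walk u w), p.IsPath ∧ p.length = k := by
  have hmany : #(univ : Finset V) * k < #(G.inducedEdges univ) + #(univ : Finset V) := by
    rw [G.inducedEdges_univ, card_univ]
    have := Fintype.card_pos (α := V)
    omega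
  obtain ⟨T, -, hT, hdeg⟩ := G.exists_subset_forall_le_card_adj k univ hmany
  obtain ⟨u, w, p, hp, hlen, -⟩ := G.exists_isPath_length_of_le_card_adj hT hdeg le_rfl
  exact ⟨u, w, p, hp, hlen⟩

/-- Let `k ≥ 1`. Any finite simple graph on `n ≥ 1` vertices with at least `n·k`
edges contains a path on `k + 1` vertices, i.e. a path of length `k`. -/
theorem exists_path_of_many_edges {V : Type} [Fintype V] [Nonempty V] [DecidableEq V]
    (G : SimpleGraph V) [DecidableRel G.Adj] (k : ℕ) (hk : 1 ≤ k)
    (h : Fintype.card V * k ≤ G.edgeFinset.card) :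
    ∃ (u w : V) (p : G.Walk u w), p.IsPath ∧ p.length = k :=
  exists_path_of_many_edges_general G k h
end

section
/- Let N ≥ 1, let W = {w_1,…,w_N} and X = {x_1,…,x_N} be disjoint vertex sets, and let δ be a permutation of {1,…,N}. Let M be the simple graph on W ∪ X whose edges are exactly {w_i, x_{δ(i)}} for each i ∈ {1,…,N} (a perfect matching). Fix j ∈ {1,…,N} and S ⊆ X, and let G' be obtained from M by adding a new vertex v adjacent to w_j and to every vertex of S. Then G' contains a cycle if and only if x_{δ(j)} ∈ S. -/
/-! Off the vertex `v`, the graph `G'` is a matching, so every vertex `a ≠ v` of a cycle has `v`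
among its two cycle-neighbours. Hence `v` lies on the cycle, and if `b` is a cycle-neighbour of `v`,
the other cycle-neighbour `c` of `b` is again adjacent to `v`: every cycle yields a triangle
`v b c`. The neighbours of `v` are `w j` and the points of `S ⊆ X`, so the only matching edge that
can join two of them is `w j — x (δ j)`, which it does iff `x (δ j) ∈ S`. -/

namespace SimpleGraph

variable {V : Type*} {G : SimpleGraph V}

theorem Walk.isCycle_triangle {a b c : V} (hab : G.Adj a b) (hbc : G.Adj b c) (hca : G.Adj c a) :
    (cons hab (cons hbc (cons hca nil))).IsCycle := by
  simp [Walk.isCycle_def, hab.ne, hbc.ne, hca.ne, hab.ne.symm, hca.ne.symm]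

theorem Walk.IsCycle.toSubgraph_adj_of_ne {v u a : V} {p : G.Walk u u} (hp : p.IsCycle)
    (huniq : ∀ ⦃a b c⦄, a ≠ v → b ≠ v → c ≠ v → G.Adj a b → G.Adj a c → b = c)
    (ha : a ∈ p.support) (hav : a ≠ v) : p.toSubgraph.Adj a v := by
  have htwo : 1 < (p.toSubgraph.neighborSet a).ncard := by
    rw [hp.ncard_neighborSet_toSubgraph_eq_two ha]; norm_num
  obtain ⟨b, hab, hbv⟩ := Set.exists_ne_of_one_lt_ncard htwo v
  obtain ⟨c, hac, hcb⟩ := Set.exists_ne_of_one_lt_ncard htwo b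
  by_contra hcv
  exact hcb (huniq hav hbv (fun h => hcv (h ▸ hac)) hab.adj_sub hac.adj_sub).symm

theorem Walk.IsCycle.exists_triangle {v u : V} {p : G.Walk u u} (hp : p.IsCycle)
    (huniq : ∀ ⦃a b c⦄, a ≠ v → b ≠ v → c ≠ v → G.Adj a b → G.Adj a c → b = c) :
    ∃ b c, G.Adj v b ∧ G.Adj b c ∧ G.Adj c v := by
  have hv : v ∈ p.support := by
    by_cases huv : u = v
    · exact huv ▸ p.start_mem_support
    · exact p.mem_verts_toSubgraph.1
        (hp.toSubgraph_adj_of_ne huniq p.start_mem_support huv).snd_mem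
  have htwo (a) (ha : a ∈ p.support) : 1 < (p.toSubgraph.neighborSet a).ncard := by
    rw [hp.ncard_neighborSet_toSubgraph_eq_two ha]; norm_num
  obtain ⟨b, hvb, -⟩ := Set.exists_ne_of_one_lt_ncard (htwo v hv) v
  have hb : b ∈ p.support := p.mem_verts_toSubgraph.1 hvb.snd_mem
  obtain ⟨c, hbc, hcv⟩ := Set.exists_ne_of_one_lt_ncard (htwo b hb) v
  have hc : c ∈ p.support := p.mem_verts_toSubgraph.1 hbc.snd_mem
  exact ⟨b, c, hvb.adj_sub, hbc.adj_sub, (hp.toSubgraph_adj_of_ne huniq hc hcv).adj_sub⟩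

theorem exists_isCycle_iff_exists_triangle {v : V}
    (huniq : ∀ ⦃a b c⦄, a ≠ v → b ≠ v → c ≠ v → G.Adj a b → G.Adj a c → b = c) :
    (∃ (u : V) (p : G.Walk u u), p.IsCycle) ↔ ∃ b c, G.Adj v b ∧ G.Adj b c ∧ G.Adj c v :=
  ⟨fun ⟨_, _, hp⟩ => hp.exists_triangle huniq,
    fun ⟨_, _, hvb, hbc, hcv⟩ => ⟨v, _, Walk.isCycle_triangle hvb hbc hcv⟩⟩

theorem eq_of_adj_of_adj_of_forall_adj_iff {ι : Type*} {M : SimpleGraph V} {w y : ι → V}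
    (hw : Function.Injective w) (hy : Function.Injective y)
    (hwy : Disjoint (Set.range w) (Set.range y))
    (hM : ∀ a b, M.Adj a b ↔ ∃ i, (a = w i ∧ b = y i) ∨ (b = w i ∧ a = y i))
    {a b c : V} (hab : M.Adj a b) (hac : M.Adj a c) : b = c := by
  have hwy' (i k) : w i ≠ y k := hwy.ne_of_mem ⟨i, rfl⟩ ⟨k, rfl⟩
  obtain ⟨i, ⟨rfl, rfl⟩ | ⟨rfl, rfl⟩⟩ := (hM a b).1 hab <;>
    obtain ⟨k, ⟨h, rfl⟩ | ⟨rfl, h⟩⟩ := (hM _ c).1 hac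
  · rw [hw h]
  · exact absurd h (hwy' i k)
  · exact absurd h.symm (hwy' k i)
  · rw [hy h]

end SimpleGraph

open SimpleGraph

theorem matching_plus_star_cycle_iff_general {V : Type} (N : ℕ)
    (w x : Fin N → V) (hw : Function.Injective w) (hx : Function.Injective x)
    (hwx : Disjoint (Set.range w) (Set.range x))
    (δ : Equiv.Perm (Fin N)) (M : SimpleGraph V)
    (hM : ∀ a b : V, M.Adj a b ↔
      ∃ i : Fin N, (a = w i ∧ b = x (δ i)) ∨ (b = w i ∧ a = x (δ i)))
    (j : Fin N) (S : Set V) (hS : S ⊆ Set.range x)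
    (v : V) (hv : v ∉ Set.range w ∪ Set.range x)
    (G' : SimpleGraph V)
    (hG' : ∀ a b : V, G'.Adj a b ↔
      M.Adj a b ∨ (a = v ∧ (b = w j ∨ b ∈ S)) ∨ (b = v ∧ (a = w j ∨ a ∈ S))) :
    (∃ (a : V) (p : G'.Walk a a), p.IsCycle) ↔ x (δ j) ∈ S := by
  have hwx' (i k) : w i ≠ x k := hwx.ne_of_mem ⟨i, rfl⟩ ⟨k, rfl⟩
  have hwS (i) : w i ∉ S := fun h => (hS h).elim fun k hk => hwx' i k hk.symm
  have hM_of_ne {a b} (hab : G'.Adj a b) (ha : a ≠ v) (hb : b ≠ v) : M.Adj a b := by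
    simpa [ha, hb] using (hG' a b).1 hab
  have hstar {b} (hvb : G'.Adj v b) : b = w j ∨ b ∈ S := by
    rcases (hG' v b).1 hvb with hMvb | ⟨-, hb⟩ | ⟨rfl, -⟩
    · obtain ⟨i, ⟨rfl, -⟩ | ⟨-, rfl⟩⟩ := (hM v b).1 hMvb <;> simp at hv
    · exact hb
    · exact absurd rfl hvb.ne
  have huniq : ∀ ⦃a b c⦄, a ≠ v → b ≠ v → c ≠ v → G'.Adj a b → G'.Adj a c → b = c :=
    fun a b c ha hb hc hab hac => eq_of_adj_of_adj_of_forall_adj_iff hw (hx.comp δ.injective)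
      (by rwa [Set.range_comp, δ.range_eq_univ, Set.image_univ]) hM
      (hM_of_ne hab ha hb) (hM_of_ne hac ha hc)
  rw [exists_isCycle_iff_exists_triangle huniq]
  constructor
  · rintro ⟨b, c, hvb, hbc, hcv⟩
    have hcross (i) (hvw : G'.Adj v (w i)) (hvx : G'.Adj v (x (δ i))) : x (δ j) ∈ S := by
      rw [← hw ((hstar hvw).resolve_right (hwS i))]
      exact (hstar hvx).resolve_left fun h => hwx' j (δ i) h.symm
    obtain ⟨i, ⟨rfl, rfl⟩ | ⟨rfl, rfl⟩⟩ := (hM b c).1 (hM_of_ne hbc hvb.ne' hcv.ne)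
    · exact hcross i hvb hcv.symm
    · exact hcross i hcv.symm hvb
  · intro hjS
    exact ⟨w j, x (δ j), (hG' _ _).2 (by simp),
      (hG' _ _).2 (.inl ((hM _ _).2 ⟨j, .inl ⟨rfl, rfl⟩⟩)), (hG' _ _).2 (by simp [hjS])⟩

/-- Let `N ≥ 1`, let `W = {w 1, …, w N}` and `X = {x 1, …, x N}` be disjoint vertex
sets, and `δ` a permutation of `{1,…,N}`. Let `M` be the perfect matching graph with
edges `{w i, x (δ i)}`. Fix `j` and `S ⊆ X`, and let `G'` be obtained from `M` by
adding a new vertex `v` adjacent to `w j` and to every vertex of `S`. Then `G'`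
contains a cycle iff `x (δ j) ∈ S`. -/
theorem matching_plus_star_cycle_iff {V : Type} [Fintype V] (N : ℕ) (hN : 1 ≤ N)
    (w x : Fin N → V) (hw : Function.Injective w) (hx : Function.Injective x)
    (hwx : Disjoint (Set.range w) (Set.range x))
    (δ : Equiv.Perm (Fin N)) (M : SimpleGraph V)
    (hM : ∀ a b : V, M.Adj a b ↔
      ∃ i : Fin N, (a = w i ∧ b = x (δ i)) ∨ (b = w i ∧ a = x (δ i)))
    (j : Fin N) (S : Set V) (hS : S ⊆ Set.range x)
    (v : V) (hv : v ∉ Set.range w ∪ Set.range x)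
    (hcover : Set.range w ∪ Set.range x ∪ {v} = Set.univ)
    (G' : SimpleGraph V)
    (hG' : ∀ a b : V, G'.Adj a b ↔
      M.Adj a b ∨ (a = v ∧ (b = w j ∨ b ∈ S)) ∨ (b = v ∧ (a = w j ∨ a ∈ S))) :
    (∃ (a : V) (p : G'.Walk a a), p.IsCycle) ↔ x (δ j) ∈ S :=
  matching_plus_star_cycle_iff_general N w x hw hx hwx δ M hM j S hS v hv G' hG'
end

section
/- Let N ≥ 1, let W = {w_1,…,w_N} and X = {x_1,…,x_N} be disjoint vertex sets, and let δ be a permutation of {1,…,N}. Let M be the simple graph on W ∪ X whose edges are exactly {w_i, x_{δ(i)}} for each i ∈ {1,…,N} (a perfect matching). Fix j ∈ {1,…,N} and S ⊆ X with |S| ≥ 2, and let G' be obtained from M by adding two new vertices v and y, where v is adjacent only to w_j and y is adjacent exactly to every vertex of S. Then G' contains a path of length 5 (a path on 6 vertices) if and only if x_{δ(j)} ∈ S. -/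
open SimpleGraph

/-!
If `x (δ j) ∈ S`, then `v, w j, x (δ j), y, s, w i` is a path for any other `s = x (δ i) ∈ S`.
Otherwise every edge whose two endpoints both have a further neighbour passes through `y`:
`v` is a leaf, `w i` has a neighbour besides `x (δ i)` only when `i = j`, and `x (δ i)` has one
besides `w i` only when `x (δ i) ∈ S`. In a path `c₀ … c₅` the edges `c₁c₂` and `c₃c₄` are of
this kind and disjoint, so no such path exists.
-/

theorem SimpleGraph.Walk.IsPath.length_lt_five_of_mid_incident {V : Type*} {G : SimpleGraph V}
    {y : V} (hmid : ∀ ⦃a u z b : V⦄, G.Adj a u → G.Adj u z → G.Adj z b → a ≠ z → u ≠ b →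
      u = y ∨ z = y)
    {a b : V} {p : G.Walk a b} (hp : p.IsPath) : p.length < 5 := by
  by_contra! hlen
  rcases p with _ | ⟨h₁, _ | ⟨h₂, _ | ⟨h₃, _ | ⟨h₄, _ | ⟨h₅, p⟩⟩⟩⟩⟩ <;>
    simp only [Walk.length_cons, Walk.length_nil] at hlen <;> try omega
  have hc₅ := p.start_mem_support
  simp only [Walk.cons_isPath_iff, Walk.support_cons, List.mem_cons, not_or] at hp
  have hc₁₂ := hmid h₁ h₂ h₃ (by grind) (by grind)
  have hc₃₄ := hmid h₃ h₄ h₅ (by grind) (by grind)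
  grind

namespace MatchingPlusTwoStars

variable {V : Type*} {N : ℕ} {w x : Fin N → V} {δ : Equiv.Perm (Fin N)} {M G' : SimpleGraph V}
  {j : Fin N} {S : Finset V} {v y : V}

theorem eq_of_adj_v
    (hM : ∀ a b : V, M.Adj a b ↔
      ∃ i : Fin N, (a = w i ∧ b = x (δ i)) ∨ (b = w i ∧ a = x (δ i)))
    (hS : (S : Set V) ⊆ Set.range x) (hv : v ∉ Set.range w ∪ Set.range x) (hvy : v ≠ y)
    (hG' : ∀ a b : V, G'.Adj a b ↔
      M.Adj a b ∨ (a = v ∧ b = w j) ∨ (b = v ∧ a = w j) ∨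
        (a = y ∧ b ∈ S) ∨ (b = y ∧ a ∈ S)) {z : V} (h : G'.Adj v z) : z = w j := by
  simp only [Set.mem_union, Set.mem_range, not_or, not_exists] at hv
  rw [hG', hM] at h
  rcases h with ⟨i, ⟨rfl, -⟩ | ⟨-, rfl⟩⟩ | ⟨-, rfl⟩ | ⟨rfl, rfl⟩ | ⟨rfl, -⟩ | ⟨-, hvS⟩
  · exact absurd rfl (hv.1 i)
  · exact absurd rfl (hv.2 _)
  · rfl
  · exact absurd rfl (hv.1 j)
  · exact absurd rfl hvy
  · obtain ⟨k, rfl⟩ := hS hvS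
    exact absurd rfl (hv.2 k)

theorem eq_of_adj_w_of_ne
    (hw : Function.Injective w) (hwx : Disjoint (Set.range w) (Set.range x))
    (hM : ∀ a b : V, M.Adj a b ↔
      ∃ i : Fin N, (a = w i ∧ b = x (δ i)) ∨ (b = w i ∧ a = x (δ i)))
    (hS : (S : Set V) ⊆ Set.range x) (hv : v ∉ Set.range w ∪ Set.range x)
    (hy : y ∉ Set.range w ∪ Set.range x)
    (hG' : ∀ a b : V, G'.Adj a b ↔
      M.Adj a b ∨ (a = v ∧ b = w j) ∨ (b = v ∧ a = w j) ∨
        (a = y ∧ b ∈ S) ∨ (b = y ∧ a ∈ S)) {i : Fin N} {z : V} (h : G'.Adj (w i) z)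
    (hz : z ≠ x (δ i)) : i = j := by
  simp only [Set.mem_union, Set.mem_range, not_or, not_exists] at hv hy
  rw [Set.disjoint_range_iff] at hwx
  rw [hG', hM] at h
  rcases h with ⟨k, ⟨hik, rfl⟩ | ⟨-, hik⟩⟩ | ⟨hiv, -⟩ | ⟨-, hij⟩ | ⟨hiy, -⟩ | ⟨-, hiS⟩
  · exact absurd (by rw [hw hik]) hz
  · exact absurd hik (hwx i _)
  · exact absurd hiv (hv.1 i)
  · exact hw hij
  · exact absurd hiy (hy.1 i)
  · obtain ⟨k, hk⟩ := hS hiS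
    exact absurd hk.symm (hwx i k)

theorem mem_of_adj_x_of_ne
    (hx : Function.Injective x) (hwx : Disjoint (Set.range w) (Set.range x))
    (hM : ∀ a b : V, M.Adj a b ↔
      ∃ i : Fin N, (a = w i ∧ b = x (δ i)) ∨ (b = w i ∧ a = x (δ i)))
    (hv : v ∉ Set.range w ∪ Set.range x) (hy : y ∉ Set.range w ∪ Set.range x)
    (hG' : ∀ a b : V, G'.Adj a b ↔
      M.Adj a b ∨ (a = v ∧ b = w j) ∨ (b = v ∧ a = w j) ∨
        (a = y ∧ b ∈ S) ∨ (b = y ∧ a ∈ S)) {i : Fin N} {z : V} (h : G'.Adj (x (δ i)) z)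
    (hz : z ≠ w i) : x (δ i) ∈ S := by
  simp only [Set.mem_union, Set.mem_range, not_or, not_exists] at hv hy
  rw [Set.disjoint_range_iff] at hwx
  rw [hG', hM] at h
  rcases h with ⟨k, ⟨hik, -⟩ | ⟨rfl, hik⟩⟩ | ⟨hiv, -⟩ | ⟨-, hij⟩ | ⟨hiy, -⟩ | ⟨-, hiS⟩
  · exact absurd hik.symm (hwx k _)
  · exact absurd (by rw [δ.injective (hx hik)]) hz
  · exact absurd hiv (hv.2 _)
  · exact absurd hij.symm (hwx j _)
  · exact absurd hiy (hy.2 _)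
  · exact hiS

theorem exists_path_of_mem
    (hw : Function.Injective w) (hwx : Disjoint (Set.range w) (Set.range x))
    (hM : ∀ a b : V, M.Adj a b ↔
      ∃ i : Fin N, (a = w i ∧ b = x (δ i)) ∨ (b = w i ∧ a = x (δ i)))
    (hS : (S : Set V) ⊆ Set.range x) (hScard : 2 ≤ S.card)
    (hv : v ∉ Set.range w ∪ Set.range x) (hy : y ∉ Set.range w ∪ Set.range x) (hvy : v ≠ y)
    (hG' : ∀ a b : V, G'.Adj a b ↔
      M.Adj a b ∨ (a = v ∧ b = w j) ∨ (b = v ∧ a = w j) ∨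
        (a = y ∧ b ∈ S) ∨ (b = y ∧ a ∈ S)) (hj : x (δ j) ∈ S) :
    ∃ (a b : V) (p : G'.Walk a b), p.IsPath ∧ p.length = 5 := by
  obtain ⟨s, hs, hsj⟩ := S.exists_mem_ne hScard (x (δ j))
  obtain ⟨k, rfl⟩ := hS hs
  have h₁ : G'.Adj v (w j) := (hG' _ _).2 <| by simp
  have h₂ : G'.Adj (w j) (x (δ j)) := (hG' _ _).2 <| .inl <| (hM _ _).2 ⟨j, by simp⟩
  have h₃ : G'.Adj (x (δ j)) y := (hG' _ _).2 <| by simp [hj]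
  have h₄ : G'.Adj y (x k) := (hG' _ _).2 <| by simp [hs]
  have h₅ : G'.Adj (x k) (w (δ.symm k)) := (hG' _ _).2 <| .inl <| (hM _ _).2 ⟨δ.symm k, by simp⟩
  refine ⟨_, _, .cons h₁ <| .cons h₂ <| .cons h₃ <| .cons h₄ <| .cons h₅ .nil, ?_, rfl⟩
  simp only [Set.mem_union, Set.mem_range, not_or, not_exists] at hv hy
  rw [Set.disjoint_range_iff] at hwx
  simp only [Walk.isPath_def, Walk.support_cons, Walk.support_nil, List.nodup_cons, List.mem_cons,
    List.not_mem_nil, List.nodup_nil]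
  grind

theorem mid_incident_of_not_mem
    (hw : Function.Injective w) (hx : Function.Injective x)
    (hwx : Disjoint (Set.range w) (Set.range x))
    (hM : ∀ a b : V, M.Adj a b ↔
      ∃ i : Fin N, (a = w i ∧ b = x (δ i)) ∨ (b = w i ∧ a = x (δ i)))
    (hS : (S : Set V) ⊆ Set.range x)
    (hv : v ∉ Set.range w ∪ Set.range x) (hy : y ∉ Set.range w ∪ Set.range x) (hvy : v ≠ y)
    (hG' : ∀ a b : V, G'.Adj a b ↔
      M.Adj a b ∨ (a = v ∧ b = w j) ∨ (b = v ∧ a = w j) ∨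
        (a = y ∧ b ∈ S) ∨ (b = y ∧ a ∈ S)) (hj : x (δ j) ∉ S)
    ⦃a u z b : V⦄ (hau : G'.Adj a u) (huz : G'.Adj u z) (hzb : G'.Adj z b) (haz : a ≠ z)
    (hub : u ≠ b) : u = y ∨ z = y := by
  have matching_edge {i : Fin N} {c d : V} (hc : G'.Adj (w i) c) (hcx : c ≠ x (δ i))
      (hd : G'.Adj (x (δ i)) d) (hdw : d ≠ w i) : False := by
    obtain rfl := eq_of_adj_w_of_ne hw hwx hM hS hv hy hG' hc hcx
    exact hj (mem_of_adj_x_of_ne hx hwx hM hv hy hG' hd hdw)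
  rw [hG', hM] at huz
  rcases huz with ⟨i, ⟨rfl, rfl⟩ | ⟨rfl, rfl⟩⟩ | ⟨rfl, rfl⟩ | ⟨rfl, rfl⟩ | ⟨rfl, -⟩ | ⟨rfl, -⟩
  · exact (matching_edge hau.symm haz hzb hub.symm).elim
  · exact (matching_edge hzb hub.symm hau.symm haz).elim
  · exact absurd (eq_of_adj_v hM hS hv hvy hG' hau.symm) haz
  · exact absurd (eq_of_adj_v hM hS hv hvy hG' hzb) hub.symm
  · exact .inl rfl
  · exact .inr rfl

end MatchingPlusTwoStars

theorem matching_plus_two_stars_path_iff_general {V : Type}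
    (N : ℕ)
    (w x : Fin N → V) (hw : Function.Injective w) (hx : Function.Injective x)
    (hwx : Disjoint (Set.range w) (Set.range x))
    (δ : Equiv.Perm (Fin N)) (M : SimpleGraph V)
    (hM : ∀ a b : V, M.Adj a b ↔
      ∃ i : Fin N, (a = w i ∧ b = x (δ i)) ∨ (b = w i ∧ a = x (δ i)))
    (j : Fin N) (S : Finset V) (hS : (S : Set V) ⊆ Set.range x) (hScard : 2 ≤ S.card)
    (v y : V) (hv : v ∉ Set.range w ∪ Set.range x) (hy : y ∉ Set.range w ∪ Set.range x)
    (hvy : v ≠ y)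
    (G' : SimpleGraph V)
    (hG' : ∀ a b : V, G'.Adj a b ↔
      M.Adj a b ∨ (a = v ∧ b = w j) ∨ (b = v ∧ a = w j) ∨
        (a = y ∧ b ∈ S) ∨ (b = y ∧ a ∈ S)) :
    (∃ (a b : V) (p : G'.Walk a b), p.IsPath ∧ p.length = 5) ↔ x (δ j) ∈ S := by
  refine ⟨fun ⟨a, b, p, hp, hlen⟩ => ?_,
    MatchingPlusTwoStars.exists_path_of_mem hw hwx hM hS hScard hv hy hvy hG'⟩
  by_contra hj
  have hmid := MatchingPlusTwoStars.mid_incident_of_not_mem hw hx hwx hM hS hv hy hvy hG' hj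
  exact (hp.length_lt_five_of_mid_incident hmid).ne hlen

/-- Let `N ≥ 1`, `W`, `X` disjoint vertex sets of size `N`, `δ` a permutation, and
`M` the perfect matching with edges `{w i, x (δ i)}`. Fix `j` and `S ⊆ X` with
`|S| ≥ 2`, and let `G'` be obtained from `M` by adding two new vertices `v`, `y`,
where `v` is adjacent only to `w j` and `y` is adjacent exactly to every vertex of
`S`. Then `G'` contains a path of length 5 (a path on 6 vertices) iff
`x (δ j) ∈ S`. -/
theorem matching_plus_two_stars_path_iff {V : Type} [Fintype V] [DecidableEq V]
    (N : ℕ) (hN : 1 ≤ N)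
    (w x : Fin N → V) (hw : Function.Injective w) (hx : Function.Injective x)
    (hwx : Disjoint (Set.range w) (Set.range x))
    (δ : Equiv.Perm (Fin N)) (M : SimpleGraph V)
    (hM : ∀ a b : V, M.Adj a b ↔
      ∃ i : Fin N, (a = w i ∧ b = x (δ i)) ∨ (b = w i ∧ a = x (δ i)))
    (j : Fin N) (S : Finset V) (hS : (S : Set V) ⊆ Set.range x) (hScard : 2 ≤ S.card)
    (v y : V) (hv : v ∉ Set.range w ∪ Set.range x) (hy : y ∉ Set.range w ∪ Set.range x)
    (hvy : v ≠ y)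
    (hcover : Set.range w ∪ Set.range x ∪ {v, y} = Set.univ)
    (G' : SimpleGraph V)
    (hG' : ∀ a b : V, G'.Adj a b ↔
      M.Adj a b ∨ (a = v ∧ b = w j) ∨ (b = v ∧ a = w j) ∨
        (a = y ∧ b ∈ S) ∨ (b = y ∧ a ∈ S)) :
    (∃ (a b : V) (p : G'.Walk a b), p.IsPath ∧ p.length = 5) ↔ x (δ j) ∈ S :=
  matching_plus_two_stars_path_iff_general N w x hw hx hwx δ M hM j S hS hScard v y hv hy hvy G' hG'
end

section
/- Let Y and W be disjoint finite nonempty sets, let H be a simple bipartite graph with parts Y and W (all edges of H go between Y and W), and fix y_α ∈ Y and w_β ∈ W. Let G be the simple graph obtained from H by adding four new vertices x_1, x_2, z_1, z_2 (distinct and outside Y ∪ W) with the following additional edges: {x_1,x_2}, {z_1,z_2}, an edge from x_1 to every vertex of Y \ {y_α}, and an edge from z_1 to every vertex of W \ {w_β}. Then G has a dominating set of size at most 3 if and only if {y_α, w_β} is an edge of H. -/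
/-!
The pendant vertices `x₂` and `z₂` force a dominating set to contain a vertex of `{x₁, x₂}` and
one of `{z₁, z₂}`, so a dominating set of size at most 3 has at most one vertex `u` in `Y ∪ W`.
Since `x₁` misses `yα` and `z₁` misses `wβ`, both `yα` and `wβ` are dominated inside `H`, hence
by `u`; in the bipartite graph `H` this forces `yα ~ wβ`. Conversely, if `yα ~ wβ` then
`{x₁, z₁, yα}` is dominating.
-/

open SimpleGraph

lemma Set.subsingleton_diff_pair_of_ncard_le_three {α : Type*} {S : Set α}
    (hfin : S.Finite) (hcard : S.ncard ≤ 3) {p q : α} (hp : p ∈ S) (hq : q ∈ S) (hpq : p ≠ q) :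
    (S \ {p, q}).Subsingleton := by
  have hpair : ({p, q} : Set α) ⊆ S := Set.insert_subset hp (Set.singleton_subset_iff.2 hq)
  have : (S \ {p, q}).ncard ≤ 1 := by
    rw [Set.ncard_sdiff hpair, Set.ncard_pair hpq]
    omega
  exact (Set.ncard_le_one hfin.sdiff).1 this

namespace SimpleGraph

variable {V : Type*} {G H : SimpleGraph V}

def IsDominatingSet (G : SimpleGraph V) (S : Set V) : Prop :=
  ∀ a, a ∉ S → ∃ b ∈ S, G.Adj a b

lemma IsDominatingSet.exists_mem_eq_or_adj {S : Set V} (hS : G.IsDominatingSet S) (v : V) :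
    ∃ b ∈ S, b = v ∨ G.Adj v b := by
  by_cases hv : v ∈ S
  · exact ⟨v, hv, .inl rfl⟩
  · obtain ⟨b, hb, hadj⟩ := hS v hv
    exact ⟨b, hb, .inr hadj⟩

lemma IsDominatingSet.exists_mem_eq_or_eq_of_forall_adj_eq {S : Set V}
    (hS : G.IsDominatingSet S) {u v : V} (hv : ∀ b, G.Adj v b → b = u) :
    ∃ b ∈ S, b = u ∨ b = v := by
  obtain ⟨b, hb, rfl | hadj⟩ := hS.exists_mem_eq_or_adj v
  · exact ⟨b, hb, .inr rfl⟩
  · exact ⟨b, hb, .inl (hv b hadj)⟩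

lemma IsBipartiteWith.mem_union_of_eq_or_adj {Y W : Set V} (h : H.IsBipartiteWith Y W)
    {y u : V} (hy : y ∈ Y) (hyu : u = y ∨ H.Adj y u) : u ∈ Y ∪ W := by
  rcases hyu with rfl | hyu
  exacts [.inl hy, .inr (h.mem_of_mem_adj hy hyu)]

lemma IsBipartiteWith.adj_of_eq_or_adj {Y W : Set V} (h : H.IsBipartiteWith Y W)
    {y w u : V} (hy : y ∈ Y) (hw : w ∈ W) (hyu : u = y ∨ H.Adj y u)
    (hwu : u = w ∨ H.Adj w u) : H.Adj y w := by
  rcases hyu with rfl | hyu <;> rcases hwu with rfl | hwu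
  · exact absurd hw (h.disjoint.notMem_of_mem_left hy)
  · exact hwu.symm
  · exact hyu
  · exact absurd (h.mem_of_mem_adj hy hyu)
      (h.disjoint.notMem_of_mem_left (h.mem_of_mem_adj' hw hwu.symm))

/-- Two vertices of `S` outside `Y ∪ W` leave room for a single vertex of `S` dominating both
`y` and `w`. -/
lemma IsBipartiteWith.adj_of_isDominatingSet {Y W : Set V} (hH : H.IsBipartiteWith Y W)
    {y w : V} (hy : y ∈ Y) (hw : w ∈ W)
    (hGy : ∀ b, G.Adj y b → H.Adj y b) (hGw : ∀ b, G.Adj w b → H.Adj w b)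
    {S : Set V} (hS : G.IsDominatingSet S) (hfin : S.Finite) (hcard : S.ncard ≤ 3)
    {p q : V} (hp : p ∈ S) (hq : q ∈ S) (hpq : p ≠ q) (hpYW : p ∉ Y ∪ W) (hqYW : q ∉ Y ∪ W) :
    H.Adj y w := by
  obtain ⟨u, huS, hyu⟩ := hS.exists_mem_eq_or_adj y
  obtain ⟨v, hvS, hwv⟩ := hS.exists_mem_eq_or_adj w
  replace hyu : u = y ∨ H.Adj y u := hyu.imp_right (hGy u)
  replace hwv : v = w ∨ H.Adj w v := hwv.imp_right (hGw v)
  have hpair : ∀ a ∈ Y ∪ W, a ∉ ({p, q} : Set V) := by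
    rintro a ha (rfl | rfl)
    exacts [hpYW ha, hqYW ha]
  have huv : u = v := Set.subsingleton_diff_pair_of_ncard_le_three hfin hcard hp hq hpq
    ⟨huS, hpair u (hH.mem_union_of_eq_or_adj hy hyu)⟩
    ⟨hvS, hpair v (hH.symm.mem_union_of_eq_or_adj hw hwv |>.symm)⟩
  exact hH.adj_of_eq_or_adj hy hw hyu (huv ▸ hwv)

end SimpleGraph

theorem dominating_set_three_iff_edge_general {V : Type} [Fintype V]
    (H G : SimpleGraph V) (Y W : Set V)
    (hdisj : Disjoint Y W)
    (hparts : ∀ a b : V, H.Adj a b → (a ∈ Y ∧ b ∈ W) ∨ (a ∈ W ∧ b ∈ Y))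
    (yα wβ x₁ x₂ z₁ z₂ : V) (hyα : yα ∈ Y) (hwβ : wβ ∈ W)
    (hnew : ({x₁, x₂, z₁, z₂} : Set V) ∩ (Y ∪ W) = ∅)
    (hdistinct : x₁ ≠ x₂ ∧ x₁ ≠ z₁ ∧ x₁ ≠ z₂ ∧ x₂ ≠ z₁ ∧ x₂ ≠ z₂ ∧ z₁ ≠ z₂)
    (hcover : Y ∪ W ∪ {x₁, x₂, z₁, z₂} = Set.univ)
    (hG : ∀ a b : V, G.Adj a b ↔ H.Adj a b ∨
      (a = x₁ ∧ b = x₂) ∨ (a = x₂ ∧ b = x₁) ∨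
      (a = z₁ ∧ b = z₂) ∨ (a = z₂ ∧ b = z₁) ∨
      (a = x₁ ∧ b ∈ Y \ {yα}) ∨ (b = x₁ ∧ a ∈ Y \ {yα}) ∨
      (a = z₁ ∧ b ∈ W \ {wβ}) ∨ (b = z₁ ∧ a ∈ W \ {wβ})) :
    (∃ S : Set V, (∀ a : V, a ∉ S → ∃ b ∈ S, G.Adj a b) ∧ S.ncard ≤ 3) ↔
      H.Adj yα wβ := by
  have hH : H.IsBipartiteWith Y W := ⟨hdisj, hparts⟩
  have hout : ∀ v ∈ ({x₁, x₂, z₁, z₂} : Set V), v ∉ Y ∪ W := fun v hv hvYW =>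
    hnew.subset ⟨hv, hvYW⟩
  simp only [Set.mem_insert_iff, Set.mem_singleton_iff, Set.mem_union, forall_eq_or_imp,
    forall_eq, not_or] at hout
  have hyW := hdisj.notMem_of_mem_left hyα
  have hwY := hdisj.notMem_of_mem_right hwβ
  have hx₂_adj : ∀ b, G.Adj x₂ b → b = x₁ := fun b h => by have := hparts x₂ b; grind
  have hz₂_adj : ∀ b, G.Adj z₂ b → b = z₁ := fun b h => by have := hparts z₂ b; grind
  have hyα_adj : ∀ b, G.Adj yα b → H.Adj yα b := fun b h => by grind
  have hwβ_adj : ∀ b, G.Adj wβ b → H.Adj wβ b := fun b h => by grind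
  constructor
  · rintro ⟨S, hS, hcard⟩
    obtain ⟨p, hpS, hp⟩ := IsDominatingSet.exists_mem_eq_or_eq_of_forall_adj_eq hS hx₂_adj
    obtain ⟨q, hqS, hq⟩ := IsDominatingSet.exists_mem_eq_or_eq_of_forall_adj_eq hS hz₂_adj
    exact hH.adj_of_isDominatingSet hyα hwβ hyα_adj hwβ_adj hS S.toFinite hcard hpS hqS
      (by grind) (by grind) (by grind)
  · intro hadj
    refine ⟨{x₁, z₁, yα}, fun a ha => ?_, by grw [Set.ncard_insert_le, Set.ncard_insert_le,
      Set.ncard_singleton]⟩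
    have ha' : a ∈ Y ∪ W ∪ {x₁, x₂, z₁, z₂} := hcover ▸ Set.mem_univ a
    simp only [Set.mem_insert_iff, Set.mem_singleton_iff, Set.mem_union, not_or] at ha ha'
    by_cases haw : a = wβ
    · exact ⟨yα, by simp, (hG _ _).2 (.inl (haw ▸ hadj.symm))⟩
    · have : G.Adj a x₁ ∨ G.Adj a z₁ := by grind
      rcases this with h | h
      exacts [⟨x₁, by simp, h⟩, ⟨z₁, by simp, h⟩]

/-- Let `Y`, `W` be disjoint finite nonempty sets, `H` a simple bipartite graph with
parts `Y`, `W`, and fix `yα ∈ Y`, `wβ ∈ W`. Let `G` be obtained from `H` by adding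
four new distinct vertices `x₁, x₂, z₁, z₂` outside `Y ∪ W` with additional edges
`{x₁,x₂}`, `{z₁,z₂}`, an edge from `x₁` to every vertex of `Y \ {yα}`, and an edge
from `z₁` to every vertex of `W \ {wβ}`. Then `G` has a dominating set of size at
most 3 iff `{yα, wβ}` is an edge of `H`. -/
theorem dominating_set_three_iff_edge {V : Type} [Fintype V]
    (H G : SimpleGraph V) (Y W : Set V)
    (hdisj : Disjoint Y W) (hYne : Y.Nonempty) (hWne : W.Nonempty)
    (hparts : ∀ a b : V, H.Adj a b → (a ∈ Y ∧ b ∈ W) ∨ (a ∈ W ∧ b ∈ Y))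
    (yα wβ x₁ x₂ z₁ z₂ : V) (hyα : yα ∈ Y) (hwβ : wβ ∈ W)
    (hnew : ({x₁, x₂, z₁, z₂} : Set V) ∩ (Y ∪ W) = ∅)
    (hdistinct : x₁ ≠ x₂ ∧ x₁ ≠ z₁ ∧ x₁ ≠ z₂ ∧ x₂ ≠ z₁ ∧ x₂ ≠ z₂ ∧ z₁ ≠ z₂)
    (hcover : Y ∪ W ∪ {x₁, x₂, z₁, z₂} = Set.univ)
    (hG : ∀ a b : V, G.Adj a b ↔ H.Adj a b ∨
      (a = x₁ ∧ b = x₂) ∨ (a = x₂ ∧ b = x₁) ∨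
      (a = z₁ ∧ b = z₂) ∨ (a = z₂ ∧ b = z₁) ∨
      (a = x₁ ∧ b ∈ Y \ {yα}) ∨ (b = x₁ ∧ a ∈ Y \ {yα}) ∨
      (a = z₁ ∧ b ∈ W \ {wβ}) ∨ (b = z₁ ∧ a ∈ W \ {wβ})) :
    (∃ S : Set V, (∀ a : V, a ∉ S → ∃ b ∈ S, G.Adj a b) ∧ S.ncard ≤ 3) ↔
      H.Adj yα wβ :=
  dominating_set_three_iff_edge_general H G Y W hdisj hparts yα wβ x₁ x₂ z₁ z₂ hyα hwβ hnew
    hdistinct hcover hG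
end

section
/- Let m ≥ 1, let B : {1,…,m} × {1,…,m} → {0,1}, and fix i*, j* ∈ {1,…,m}. Consider the 2-CNF formula over Boolean variables x_1,…,x_m, y_1,…,y_m consisting of: for each pair (i,j), the clause (x_i ∨ y_j) if B(i,j)=0 and the clause (¬x_i ∨ y_j) if B(i,j)=1; together with the unit clause (¬y_{j*}) and the clause (x_{i*} ∨ y_{j*}). Then this formula is satisfiable (there exist truth assignments σ, τ : {1,…,m} → {true,false} for the x- and y-variables making every clause true) if and only if B(i*,j*) = 0. -/
/-! Forced by the unit clause, `y_{j*}` is false, so `x_{i*}` is true, and the clause of the pair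
`(i*, j*)` then holds exactly when `B i* j* = 0`. Conversely, when `B i* j* = 0`, make every `y_j`
with `j ≠ j*` true and set `x_i := ¬B(i, j*)`, which satisfies the remaining column `j = j*`. -/

theorem twoSat_satisfiable_iff_general (m : ℕ) (B : Fin m → Fin m → Bool)
    (i' j' : Fin m) :
    (∃ σ τ : Fin m → Bool,
      (∀ i j : Fin m,
        (B i j = false → (σ i = true ∨ τ j = true)) ∧
        (B i j = true → (σ i = false ∨ τ j = true))) ∧
      τ j' = false ∧ (σ i' = true ∨ τ j' = true)) ↔ B i' j' = false := by
  constructor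
  · rintro ⟨σ, τ, hclauses, hτ, hcross⟩
    have hσ : σ i' = true := hcross.resolve_right (by simp [hτ])
    rw [← Bool.not_eq_true]
    intro hB
    simpa [hσ, hτ] using (hclauses i' j').2 hB
  · intro hB
    refine ⟨fun i => !B i j', fun j => decide (j ≠ j'), fun i j => ?_, by simp, by simp [hB]⟩
    by_cases hj : j = j'
    · subst hj
      cases hBij : B i j <;> simp [hBij]
    · simp [hj]

/-- Let `m ≥ 1`, `B : {1,…,m} × {1,…,m} → {0,1}` and fix `i*, j*`. The 2-CNF formula
over variables `x₁,…,x_m, y₁,…,y_m` consisting of, for each pair `(i,j)`, the clause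
`(x_i ∨ y_j)` if `B i j = 0` and `(¬x_i ∨ y_j)` if `B i j = 1`, together with the
unit clause `(¬y_{j*})` and the clause `(x_{i*} ∨ y_{j*})`, is satisfiable iff
`B i* j* = 0`. Here `false` plays the role of `0` and `true` of `1`. -/
theorem twoSat_satisfiable_iff (m : ℕ) (hm : 1 ≤ m) (B : Fin m → Fin m → Bool)
    (i' j' : Fin m) :
    (∃ σ τ : Fin m → Bool,
      (∀ i j : Fin m,
        (B i j = false → (σ i = true ∨ τ j = true)) ∧
        (B i j = true → (σ i = false ∨ τ j = true))) ∧
      τ j' = false ∧ (σ i' = true ∨ τ j' = true)) ↔ B i' j' = false :=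
  twoSat_satisfiable_iff_general m B i' j'
end
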